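/- For finite sets $M$ and $N$, $|S^k(M \times N)| = \sum_{\underline{k}: \sum_i i k_i = k} \frac{m(m-1)\cdots(m - \sum_i k_i + 1)}{\prod_i k_i!} \prod_i |S^i N|^{k_i}$, where $m = |M|$. -/
import Mathlib


open Finset

lemma mc_succ (n k : ℕ) :
    Nat.multichoose (n + 1) k = ∑ i ∈ range (k + 1), Nat.multichoose n i := by
  induction k with
  | zero => simp
  | succ k ih =>
      rw [Nat.multichoose_succ_succ, ih, sum_range_succ (n := k + 1), add_comm]

lemma mc_conv (a b k : ℕ) :
    Nat.multichoose (a + b) k =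
      ∑ i ∈ range (k + 1), Nat.multichoose a i * Nat.multichoose b (k - i) := by
  induction b generalizing k with
  | zero =>
      rw [Nat.add_zero]
      rw [Finset.sum_eq_single_of_mem k (self_mem_range_succ k)]
      · simp
      · intro i hi hik
        have : k - i ≠ 0 := by
          have := mem_range_succ_iff.mp hi
          omega
        obtain ⟨t, ht⟩ := Nat.exists_eq_succ_of_ne_zero this
        rw [ht, Nat.multichoose_zero_succ, mul_zero]
  | succ b ih =>
      have h1 : a + (b + 1) = (a + b) + 1 := by ring
      rw [h1, mc_succ]
      have h2 : ∀ i ∈ range (k + 1), Nat.multichoose (a+b) i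
          = ∑ j ∈ range (k+1), if j ≤ i then Nat.multichoose a j * Nat.multichoose b (i - j) else 0 := by
        intro i hi
        rw [ih i, ← Finset.sum_filter]
        apply Finset.sum_congr
        · ext j
          simp only [mem_filter, mem_range]
          have := mem_range_succ_iff.mp hi
          omega
        · intros; rfl
      rw [Finset.sum_congr rfl h2, Finset.sum_comm]
      refine Finset.sum_congr rfl fun j hj => ?_
      rw [mc_succ]
      have hjk := mem_range_succ_iff.mp hj
      rw [Finset.mul_sum, ← Finset.sum_filter]
      refine Finset.sum_nbij' (fun i => i - j) (fun t => t + j) ?_ ?_ ?_ ?_ ?_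
      · intro i hi
        simp only [mem_filter, mem_range] at hi ⊢
        omega
      · intro t ht
        simp only [mem_filter, mem_range] at ht ⊢
        omega
      · intro i hi; simp only [mem_filter, mem_range] at hi; omega
      · intro t ht; simp only [mem_range] at ht; omega
      · intro i hi
        simp only [mem_filter, mem_range] at hi
        rw [mul_comm]

lemma part_le {k : ℕ} (p : Nat.Partition k) {i : ℕ} (h : i ∈ p.parts) : i ≤ k := by
  have h1 := Multiset.cons_erase h
  have h2 : (i ::ₘ p.parts.erase i).sum = k := by rw [h1, p.parts_sum]
  rw [Multiset.sum_cons] at h2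
  omega

lemma count_eq_zero_of_gt {k : ℕ} (p : Nat.Partition k) {i : ℕ} (h : k < i) :
    p.parts.count i = 0 := by
  rw [Multiset.count_eq_zero]
  intro hmem
  exact absurd (part_le p hmem) (by omega)

/-- Summand of the partition sum. -/
noncomputable def pt (s : ℕ → ℚ) (x : ℚ) (k : ℕ) (p : Nat.Partition k) : ℚ :=
  (descPochhammer ℚ (Multiset.card p.parts)).eval x /
    (∏ i ∈ range (k + 1), (Nat.factorial (p.parts.count i) : ℚ)) *
    ∏ i ∈ range (k + 1), s i ^ p.parts.count i

/-- Auxiliary summand appearing in the recurrence. -/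
noncomputable def ht (s : ℕ → ℚ) (x : ℚ) (k : ℕ) (p : Nat.Partition k) (j : ℕ) : ℚ :=
  (p.parts.count j : ℚ) *
    ((descPochhammer ℚ (Multiset.card p.parts - 1)).eval x /
      (∏ i ∈ range (k + 1), (Nat.factorial (p.parts.count i) : ℚ)) *
      ∏ i ∈ range (k + 1), s i ^ p.parts.count i)

lemma prod_ext2 (f : ℕ → ℕ → ℚ) (hf : ∀ i, f i 0 = 1) {k K : ℕ} (hkK : k ≤ K)
    (q : Nat.Partition k) :
    ∏ i ∈ range (K + 1), f i (q.parts.count i) = ∏ i ∈ range (k + 1), f i (q.parts.count i) := by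
  refine (Finset.prod_subset (range_subset_range.mpr (by omega)) ?_).symm
  intro i hi hni
  rw [mem_range, not_lt] at hni
  rw [count_eq_zero_of_gt q (by omega), hf]

lemma key (s : ℕ → ℚ) (x : ℚ) {k j : ℕ} (hj1 : 1 ≤ j) (hjk : j ≤ k)
    (p : Nat.Partition k) (q : Nat.Partition (k - j)) (hpq : p.parts = j ::ₘ q.parts) :
    ht s x k p j = s j * pt s x (k - j) q := by
  have hcount : ∀ i, p.parts.count i = q.parts.count i + if i = j then 1 else 0 := by
    intro i; rw [hpq, Multiset.count_cons]
  have hcard : Multiset.card p.parts = Multiset.card q.parts + 1 := by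
    rw [hpq, Multiset.card_cons]
  have hjmem : j ∈ range (k + 1) := mem_range_succ_iff.mpr hjk
  have hsplit : ∀ (f : ℕ → ℕ → ℚ), ∏ i ∈ range (k + 1), f i (p.parts.count i)
      = f j (q.parts.count j + 1) * ∏ i ∈ (range (k + 1)).erase j, f i (q.parts.count i) := by
    intro f
    rw [← Finset.mul_prod_erase _ _ hjmem]
    congr 1
    · rw [hcount j, if_pos rfl]
    · exact Finset.prod_congr rfl fun i hi => by
        rw [hcount i, if_neg (Finset.ne_of_mem_erase hi), Nat.add_zero]
  have hsplitq : ∀ (f : ℕ → ℕ → ℚ), ∏ i ∈ range (k + 1), f i (q.parts.count i)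
      = f j (q.parts.count j) * ∏ i ∈ (range (k + 1)).erase j, f i (q.parts.count i) :=
    fun f => (Finset.mul_prod_erase _ _ hjmem).symm
  unfold ht pt
  rw [hcard, Nat.add_sub_cancel]
  rw [hsplit (fun _ c => (Nat.factorial c : ℚ)), hsplit (fun i c => s i ^ c)]
  rw [← prod_ext2 (fun _ c => (Nat.factorial c : ℚ)) (fun _ => by norm_num [Nat.factorial])
      (Nat.sub_le k j) q,
    ← prod_ext2 (fun i c => s i ^ c) (fun i => pow_zero (s i)) (Nat.sub_le k j) q]
  rw [hsplitq (fun _ c => (Nat.factorial c : ℚ)), hsplitq (fun i c => s i ^ c)]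
  rw [hcount j, if_pos rfl]
  set c := q.parts.count j
  set A := ∏ i ∈ (range (k + 1)).erase j, ((Nat.factorial (q.parts.count i)) : ℚ) with hA
  set B := ∏ i ∈ (range (k + 1)).erase j, s i ^ q.parts.count i
  have hAne : A ≠ 0 := by
    rw [hA]
    exact Finset.prod_ne_zero_iff.mpr fun i _ => Nat.cast_ne_zero.mpr (Nat.factorial_ne_zero _)
  have hcne : ((c : ℚ) + 1) ≠ 0 := by positivity
  have hfact : ((Nat.factorial c : ℚ)) ≠ 0 := Nat.cast_ne_zero.mpr (Nat.factorial_ne_zero _)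
  rw [Nat.factorial_succ, pow_succ]
  push_cast
  field_simp

/-- The partition-sum side of the identity. -/
noncomputable def Rp (s : ℕ → ℚ) (x : ℚ) (k : ℕ) : ℚ :=
  ∑ p : Nat.Partition k, pt s x k p

lemma sum_count (k : ℕ) (p : Nat.Partition k) :
    ∑ i ∈ range (k + 1), p.parts.count i = Multiset.card p.parts := by
  rw [← Multiset.toFinset_sum_count_eq p.parts]
  refine (Finset.sum_subset ?_ ?_).symm
  · intro i hi
    rw [Multiset.mem_toFinset] at hi
    exact mem_range_succ_iff.mpr (part_le p hi)
  · intro i _ hni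
    rw [Multiset.count_eq_zero]
    rwa [Multiset.mem_toFinset] at hni

lemma descPochhammer_step (x : ℚ) (l : ℕ) :
    (descPochhammer ℚ l).eval (x + 1) =
      (descPochhammer ℚ l).eval x + l * (descPochhammer ℚ (l - 1)).eval x := by
  cases l with
  | zero => simp
  | succ t =>
      have h1 : (descPochhammer ℚ (t+1)).eval (x+1)
          = (x+1) * (descPochhammer ℚ t).eval x := by
        rw [descPochhammer_succ_left]
        simp [Polynomial.eval_comp]
      have h2 : (descPochhammer ℚ (t+1)).eval x
          = (descPochhammer ℚ t).eval x * (x - t) := by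
        rw [descPochhammer_succ_right]
        simp
      rw [h1, h2]
      simp only [Nat.add_sub_cancel]
      push_cast
      ring

def eraseP {k : ℕ} (j : ℕ) (p : Nat.Partition k) (hj : j ∈ p.parts) : Nat.Partition (k - j) where
  parts := p.parts.erase j
  parts_pos := fun hi => p.parts_pos (Multiset.mem_of_mem_erase hi)
  parts_sum := by
    have h1 := Multiset.cons_erase hj
    have h2 : (j ::ₘ p.parts.erase j).sum = k := by rw [h1, p.parts_sum]
    rw [Multiset.sum_cons] at h2
    omega

def consP {k : ℕ} (j : ℕ) (hj1 : 1 ≤ j) (hjk : j ≤ k) (q : Nat.Partition (k - j)) :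
    Nat.Partition k where
  parts := j ::ₘ q.parts
  parts_pos := fun {i} hi => by
    rcases Multiset.mem_cons.mp hi with h | h
    · omega
    · exact q.parts_pos h
  parts_sum := by rw [Multiset.sum_cons, q.parts_sum]; omega

lemma Rp_succ (s : ℕ → ℚ) (hs : s 0 = 1) (x : ℚ) (k : ℕ) :
    Rp s (x + 1) k = ∑ j ∈ range (k + 1), s j * Rp s x (k - j) := by
  have hterm : ∀ p : Nat.Partition k,
      pt s (x + 1) k p = pt s x k p + ∑ j ∈ range (k + 1), ht s x k p j := by
    intro p
    have hsum : ∑ j ∈ range (k + 1), (p.parts.count j : ℚ) = (Multiset.card p.parts : ℚ) := by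
      rw [← Nat.cast_sum, sum_count]
    unfold pt ht
    rw [← Finset.sum_mul, hsum, descPochhammer_step]
    ring
  have hzero : ∀ p : Nat.Partition k, ht s x k p 0 = 0 := by
    intro p
    have h0 : p.parts.count 0 = 0 :=
      Multiset.count_eq_zero.mpr (fun h => lt_irrefl 0 (p.parts_pos h))
    unfold ht; rw [h0]; simp
  have hstep : ∀ j, 1 ≤ j → j ≤ k →
      (∑ p : Nat.Partition k, ht s x k p j) = s j * Rp s x (k - j) := by
    intro j hj1 hjk
    rw [Rp, Finset.mul_sum]
    have hcond : ∀ p ∈ (univ : Finset (Nat.Partition k)), ht s x k p j ≠ 0 → j ∈ p.parts := by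
      intro p _ hne
      by_contra hmem
      apply hne
      have h0 : p.parts.count j = 0 := Multiset.count_eq_zero.mpr hmem
      unfold ht; rw [h0]; simp
    rw [← Finset.sum_filter_of_ne hcond]
    refine Finset.sum_bij' (fun p hp => eraseP j p (Finset.mem_filter.mp hp).2)
      (fun q _ => consP j hj1 hjk q) (fun p hp => mem_univ _) ?_ ?_ ?_ ?_
    · intro q _
      simp only [Finset.mem_filter, Finset.mem_univ, true_and]
      exact Multiset.mem_cons_self j q.parts
    · intro p hp
      apply Nat.Partition.ext
      exact Multiset.cons_erase (Finset.mem_filter.mp hp).2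
    · intro q _
      apply Nat.Partition.ext
      exact Multiset.erase_cons_head j q.parts
    · intro p hp
      exact key s x hj1 hjk p (eraseP j p (Finset.mem_filter.mp hp).2)
        (Multiset.cons_erase (Finset.mem_filter.mp hp).2).symm
  calc Rp s (x + 1) k
      = ∑ p : Nat.Partition k, (pt s x k p + ∑ j ∈ range (k + 1), ht s x k p j) :=
        Finset.sum_congr rfl fun p _ => hterm p
    _ = Rp s x k + ∑ j ∈ range (k + 1), ∑ p : Nat.Partition k, ht s x k p j := by
        rw [Finset.sum_add_distrib, Finset.sum_comm, Rp]
    _ = ∑ j ∈ range (k + 1), s j * Rp s x (k - j) := by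
        rw [Finset.sum_range_succ' (fun j => s j * Rp s x (k - j)) k,
          Finset.sum_range_succ' (fun j => ∑ p : Nat.Partition k, ht s x k p j) k]
        rw [Finset.sum_eq_zero fun p _ => hzero p]
        simp only [hs, Nat.sub_zero, one_mul, add_zero]
        rw [Finset.sum_congr rfl (fun i hi => hstep (i + 1) (by omega)
          (by have := mem_range.mp hi; omega))]
        ring

lemma Rp_zero_k (s : ℕ → ℚ) (k : ℕ) (hk : k ≠ 0) : Rp s 0 k = 0 := by
  unfold Rp pt
  refine Finset.sum_eq_zero fun p _ => ?_
  have hcard : Multiset.card p.parts ≠ 0 := by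
    intro h0
    rw [Multiset.card_eq_zero] at h0
    have := p.parts_sum
    rw [h0] at this
    simp at this
    omega
  rw [descPochhammer_ne_zero_eval_zero (R := ℚ) hcard, zero_div, zero_mul]

lemma Rp_x_zero (s : ℕ → ℚ) (x : ℚ) : Rp s x 0 = 1 := by
  unfold Rp pt
  rw [Fintype.sum_unique]
  have hparts : (default : Nat.Partition 0).parts = 0 := rfl
  simp [hparts]

lemma main_lemma (n m k : ℕ) :
    (Nat.multichoose (m * n) k : ℚ)
      = Rp (fun i => (Nat.multichoose n i : ℚ)) (m : ℚ) k := by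
  induction m generalizing k with
  | zero =>
      cases k with
      | zero => simp [Rp_x_zero]
      | succ k =>
          rw [Nat.zero_mul, Nat.multichoose_zero_succ, Nat.cast_zero,
            Rp_zero_k _ _ (Nat.succ_ne_zero k)]
  | succ m ih =>
      have h1 : (m + 1) * n = n + m * n := by ring
      have hs : (fun i => (Nat.multichoose n i : ℚ)) 0 = 1 := by
        simp [Nat.multichoose_zero_right]
      have h2 : ((m + 1 : ℕ) : ℚ) = (m : ℚ) + 1 := by push_cast; ring
      rw [h1, mc_conv, h2, Rp_succ _ hs]
      push_cast
      exact Finset.sum_congr rfl fun i _ => by rw [ih]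

/-- For finite sets `M` and `N`,
`|S^k(M × N)| = ∑_{k̲ : ∑ i k_i = k} (m)_{∑ k_i} / ∏ k_i! · ∏ |S^i N|^{k_i}`,
where `m = |M|` and `(m)_s` is the falling factorial. Finitely supported sequences
`(k_i)` with `∑ i·k_i = k` are encoded as partitions `p` of `k`, with
`k_i = p.parts.count i`. -/
theorem stmt1 (M N : Type*) [Fintype M] [Fintype N] [DecidableEq M] [DecidableEq N]
    (m : ℕ) (hm : Fintype.card M = m) (k : ℕ) :
    (Fintype.card (Sym (M × N) k) : ℚ) =
      ∑ p : Nat.Partition k,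
        (descPochhammer ℚ (Multiset.card p.parts)).eval (m : ℚ) /
          (∏ i ∈ Finset.range (k + 1), (Nat.factorial (p.parts.count i) : ℚ)) *
          ∏ i ∈ Finset.range (k + 1), (Fintype.card (Sym N i) : ℚ) ^ p.parts.count i := by
  rw [Sym.card_sym_eq_multichoose, Fintype.card_prod, hm, main_lemma (Fintype.card N) m k]
  unfold Rp pt
  refine Finset.sum_congr rfl fun p _ => ?_
  congr 1
  refine Finset.prod_congr rfl fun i _ => ?_
  rw [Sym.card_sym_eq_multichoose]
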